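/- Let (A, ν) be a commutative ring with a negative pseudovaluation, let f ∈ A be a non-zero divisor, and let d > 0; let ν' be the induced pseudovaluation on the localization A_f. Define τ : A_f → ℝ ∪ {∞} by τ(z) = sup{ ν(a) − m·d : a ∈ A, m ∈ ℕ, z = a/f^m in A_f }. Then there exists a real constant Q > 0 such that ν'(z) ≥ τ(z) ≥ Q·ν'(z) for all z ∈ A_f. -/

import Mathlib

/-! Write `z = g(1/f)` with `g = Σ_{i ≤ n} gᵢ Xⁱ` of degree `n`, so that `V = μ(g)` is finite.
Then `z = a / fⁿ` with `a = Σ gᵢ f^{n-i}`, and for a real `r ≤ min (ν f) 0` one gets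
`ν(a) ≥ V + n r`, while the leading coefficient forces `V ≤ ν(gₙ) - n d ≤ -n d`. Hence
`ν(a) - n d ≥ V + n (r - d) ≥ (2 - r/d) V`, so `Q = (2d - r)/d` works. Conversely `a / fᵐ` is the
image of the monomial `a Xᵐ`, which gives `τ ≤ ν'`. -/

open scoped Classical

noncomputable section

/-- A pseudovaluation on a commutative ring `A`: a function `ν : A → ℝ ∪ {±∞}` with
`ν 0 = ∞`, `ν 1 = 0`, `ν (a - b) ≥ min (ν a) (ν b)`, and `ν (a*b) ≥ ν a + ν b`
whenever `ν a ≠ -∞` and `ν b ≠ -∞`. -/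
structure IsPseudovaluation {A : Type*} [CommRing A] (ν : A → EReal) : Prop where
  map_zero : ν 0 = ⊤
  map_one : ν 1 = 0
  min_le_sub : ∀ a b : A, min (ν a) (ν b) ≤ ν (a - b)
  add_le_mul : ∀ a b : A, ν a ≠ ⊥ → ν b ≠ ⊥ → ν a + ν b ≤ ν (a * b)

/-- A proper pseudovaluation never takes the value `-∞`. -/
def IsProperPV {A : Type*} [CommRing A] (ν : A → EReal) : Prop :=
  IsPseudovaluation ν ∧ ∀ a : A, ν a ≠ ⊥

/-- A negative pseudovaluation is proper and satisfies `ν a ≤ 0` for `a ≠ 0`. -/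
def IsNegativePV {A : Type*} [CommRing A] (ν : A → EReal) : Prop :=
  IsPseudovaluation ν ∧ (∀ a : A, ν a ≠ ⊥) ∧ ∀ a : A, a ≠ 0 → ν a ≤ 0

/-- `f` is localizing with respect to `ν` if there are `C > 0`, `D ≥ 0` with
`ν (fⁿ x) ≤ C · ν x + n D` for all `n` and `x`. -/
def IsLocalizing {A : Type*} [CommRing A] (ν : A → EReal) (f : A) : Prop :=
  ∃ C D : ℝ, 0 < C ∧ 0 ≤ D ∧ ∀ (n : ℕ) (x : A),
    ν (f ^ n * x) ≤ (C : EReal) * ν x + (((n : ℝ) * D : ℝ) : EReal)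

/-- Two functions `A → ℝ ∪ {±∞}` are linearly equivalent if they dominate each other
up to positive multiplicative and nonnegative additive constants. -/
def LinearlyEquivalent {A : Type*} (ν₁ ν₂ : A → EReal) : Prop :=
  ∃ c₁ c₂ d₁ d₂ : ℝ, 0 < c₁ ∧ 0 < c₂ ∧ 0 ≤ d₁ ∧ 0 ≤ d₂ ∧
    (∀ a : A, (c₂ : EReal) * ν₂ a - (d₂ : EReal) ≤ ν₁ a) ∧
    (∀ a : A, (c₁ : EReal) * ν₁ a - (d₁ : EReal) ≤ ν₂ a)

/-- The weighted degree pseudovaluation on a multivariate polynomial ring: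
`ν (Σ_k c_k T^k) = inf_k { μ(c_k) - Σ_i k_i d_i }`. -/
def weightedDegPV {R : Type*} [CommRing R] (μ : R → EReal) {m : ℕ} (d : Fin m → ℝ)
    (f : MvPolynomial (Fin m) R) : EReal :=
  ⨅ k : Fin m →₀ ℕ, (μ (MvPolynomial.coeff k f) - ((∑ i, (k i : ℝ) * d i : ℝ) : EReal))

/-- A pseudovaluation `τ` on an `R`-algebra `B` is admissible (relative to `μ` on `R`)
if it is the quotient of a weighted degree pseudovaluation under some surjection
from a polynomial ring. -/
def IsAdmissiblePV {R B : Type*} [CommRing R] [CommRing B] [Algebra R B]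
    (μ : R → EReal) (τ : B → EReal) : Prop :=
  ∃ (m : ℕ) (π : MvPolynomial (Fin m) R →ₐ[R] B) (d : Fin m → ℝ),
    Function.Surjective π ∧ (∀ i, 0 < d i) ∧
    ∀ b : B, τ b = ⨆ (f : MvPolynomial (Fin m) R) (_ : π f = b), weightedDegPV μ d f

/-- The pseudovaluation `μ (Σ_i a_i X^i) = min_i { ν(a_i) - i·d }` on `A[X]`. -/
def polyPV {A : Type*} [CommRing A] (ν : A → EReal) (d : ℝ) (g : Polynomial A) : EReal :=
  ⨅ i : ℕ, (ν (g.coeff i) - (((i : ℝ) * d : ℝ) : EReal))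

/-- The induced pseudovaluation on the localization `A_f`: the quotient of `polyPV ν d`
under the map `A[X] → A_f`, `X ↦ f⁻¹`. -/
def locPV {A : Type*} [CommRing A] (ν : A → EReal) (f : A) (d : ℝ)
    (z : Localization.Away f) : EReal :=
  ⨆ (g : Polynomial A)
    (_ : Polynomial.aeval (IsLocalization.Away.invSelf (S := Localization.Away f) f) g = z),
    polyPV ν d g

/-- The Gauss norm `γ_ε(α) = inf_i { i + ε p^{-i} ν(a_i) }` of a Witt vector. -/
def gaussNorm (p : ℕ) {A : Type*} [CommRing A] (ν : A → EReal) (ε : ℝ)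
    (α : WittVector p A) : EReal :=
  ⨅ i : ℕ, ((i : EReal) + ((ε * (p : ℝ) ^ (-(i : ℤ)) : ℝ) : EReal) * ν (α.coeff i))

/-- A Witt vector is overconvergent if `γ_ε(α) ≠ -∞` for some `ε > 0`. -/
def IsOverconvergent (p : ℕ) {A : Type*} [CommRing A] (ν : A → EReal)
    (α : WittVector p A) : Prop :=
  ∃ ε : ℝ, 0 < ε ∧ gaussNorm p ν ε α ≠ ⊥

/-- The trivial valuation on an integral domain: `ν 0 = ∞` and `ν a = 0` for `a ≠ 0`. -/
def trivialPV (K : Type*) [Zero K] : K → EReal :=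
  fun a => if a = 0 then (⊤ : EReal) else 0

open Polynomial

namespace IsPseudovaluation

variable {A : Type*} [CommRing A] {ν : A → EReal}

lemma le_map_neg (h : IsPseudovaluation ν) (a : A) : ν a ≤ ν (-a) := by
  simpa [h.map_zero] using h.min_le_sub 0 a

lemma min_le_add (h : IsPseudovaluation ν) (a b : A) : min (ν a) (ν b) ≤ ν (a + b) := by
  simpa using (min_le_min_left _ (h.le_map_neg b)).trans (h.min_le_sub a (-b))

lemma le_sum (h : IsPseudovaluation ν) {ι : Type*} {s : Finset ι} {g : ι → A} {V : EReal}
    (hV : ∀ i ∈ s, V ≤ ν (g i)) : V ≤ ν (∑ i ∈ s, g i) :=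
  Finset.sum_induction g (fun x => V ≤ ν x)
    (fun a b ha hb => (le_min ha hb).trans (h.min_le_add a b)) (by simp [h.map_zero]) hV

lemma nat_mul_le_pow (h : IsPseudovaluation ν) (hb : ∀ a, ν a ≠ ⊥) {f : A} {r : ℝ}
    (hr : (r : EReal) ≤ ν f) (k : ℕ) : (((k : ℝ) * r : ℝ) : EReal) ≤ ν (f ^ k) := by
  induction k with
  | zero => simp [h.map_one]
  | succ k ih =>
    calc ((((k + 1 : ℕ) : ℝ) * r : ℝ) : EReal) = (((k : ℝ) * r : ℝ) : EReal) + r := by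
          rw [Nat.cast_succ, add_mul, one_mul, EReal.coe_add]
      _ ≤ ν (f ^ k) + ν f := add_le_add ih hr
      _ ≤ ν (f ^ (k + 1)) := pow_succ f k ▸ h.add_le_mul _ _ (hb _) (hb _)

end IsPseudovaluation

section polyPV

variable {A : Type*} [CommRing A] {ν : A → EReal} {d : ℝ}

lemma polyPV_le_coeff (g : A[X]) (i : ℕ) :
    polyPV ν d g ≤ ν (g.coeff i) - (((i : ℝ) * d : ℝ) : EReal) :=
  iInf_le _ i

lemma polyPV_monomial (h0 : ν 0 = ⊤) (m : ℕ) (a : A) :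
    polyPV ν d (monomial m a) = ν a - (((m : ℝ) * d : ℝ) : EReal) := by
  refine le_antisymm (by simpa using polyPV_le_coeff (monomial m a) m) (le_iInf fun i => ?_)
  rcases eq_or_ne m i with rfl | hmi
  · simp
  · rw [coeff_monomial, if_neg hmi, h0, EReal.top_sub_coe]
    exact le_top

lemma polyPV_ne_bot (h0 : ν 0 = ⊤) (hb : ∀ a, ν a ≠ ⊥) (g : A[X]) : polyPV ν d g ≠ ⊥ := by
  set F : ℕ → EReal := fun i => ν (g.coeff i) - (((i : ℝ) * d : ℝ) : EReal)
  have hne : (Finset.range (g.natDegree + 1)).Nonempty := Finset.nonempty_range_add_one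
  obtain ⟨i, -, hi⟩ := Finset.exists_mem_eq_inf' hne F
  have hinf : (Finset.range (g.natDegree + 1)).inf' hne F ≤ polyPV ν d g := by
    refine le_iInf fun j => ?_
    by_cases hj : j < g.natDegree + 1
    · exact Finset.inf'_le F (Finset.mem_range.mpr hj)
    · rw [coeff_eq_zero_of_natDegree_lt (by omega), h0, EReal.top_sub_coe]
      exact le_top
  rw [hi] at hinf
  refine ne_bot_of_le_ne_bot ?_ hinf
  simp only [F, sub_eq_add_neg, ← EReal.coe_neg, ne_eq, EReal.add_eq_bot_iff, EReal.coe_ne_bot,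
    or_false]
  exact hb (g.coeff i)

lemma polyPV_le_neg_natDegree_mul (hneg : ∀ a : A, a ≠ 0 → ν a ≤ 0) {g : A[X]} (hg : g ≠ 0) :
    polyPV ν d g ≤ ((-((g.natDegree : ℝ) * d) : ℝ) : EReal) :=
  calc polyPV ν d g ≤ ν g.leadingCoeff - (((g.natDegree : ℝ) * d : ℝ) : EReal) :=
        polyPV_le_coeff g _
    _ ≤ 0 - (((g.natDegree : ℝ) * d : ℝ) : EReal) :=
        EReal.sub_le_sub (hneg _ (leadingCoeff_ne_zero.mpr hg)) le_rfl
    _ = ((-((g.natDegree : ℝ) * d) : ℝ) : EReal) := by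
        rw [← EReal.coe_zero, ← EReal.coe_sub, zero_sub]

lemma add_nat_mul_le_sum_coeff_mul_pow (hν : IsPseudovaluation ν) (hb : ∀ a, ν a ≠ ⊥)
    {f : A} {r v : ℝ} (hrd : r ≤ d) (hrf : (r : EReal) ≤ ν f) {g : A[X]}
    (hv : (v : EReal) ≤ polyPV ν d g) (n : ℕ) :
    ((v + n * r : ℝ) : EReal) ≤ ν (∑ i ∈ Finset.range (n + 1), g.coeff i * f ^ (n - i)) := by
  refine hν.le_sum fun i hi => ?_
  have hin : i ≤ n := Nat.lt_succ_iff.mp (Finset.mem_range.mp hi)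
  have hcoeff : ((v + i * d : ℝ) : EReal) ≤ ν (g.coeff i) := by
    simpa using EReal.add_le_of_le_sub (hv.trans (polyPV_le_coeff g i))
  calc ((v + n * r : ℝ) : EReal) ≤ ((v + i * d + ((n - i : ℕ) : ℝ) * r : ℝ) : EReal) := by
        rw [EReal.coe_le_coe_iff, Nat.cast_sub hin]
        nlinarith [mul_nonneg (Nat.cast_nonneg (α := ℝ) i) (sub_nonneg.mpr hrd)]
    _ ≤ ν (g.coeff i) + ν (f ^ (n - i)) := by
        rw [EReal.coe_add]
        exact add_le_add hcoeff (hν.nat_mul_le_pow hb hrf _)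
    _ ≤ ν (g.coeff i * f ^ (n - i)) := hν.add_le_mul _ _ (hb _) (hb _)

end polyPV

section Localization

variable {A S : Type*} [CommRing A] [CommRing S] [Algebra A S] {f : A} [IsLocalization.Away f S]

open IsLocalization.Away

lemma algebraMap_pow_mul_invSelf_pow {i n : ℕ} (hin : i ≤ n) :
    algebraMap A S (f ^ n) * invSelf (S := S) f ^ i = algebraMap A S (f ^ (n - i)) := by
  obtain ⟨k, rfl⟩ := Nat.exists_eq_add_of_le hin
  rw [Nat.add_sub_cancel_left, pow_add, map_mul, mul_right_comm, map_pow, ← mul_pow,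
    mul_invSelf, one_pow, one_mul]

lemma aeval_invSelf_monomial {a : A} {m : ℕ} {z : S}
    (h : algebraMap A S a = algebraMap A S (f ^ m) * z) :
    aeval (invSelf (S := S) f) (monomial m a) = z := by
  rw [aeval_monomial, h, mul_right_comm, algebraMap_pow_mul_invSelf_pow le_rfl, Nat.sub_self,
    pow_zero, map_one, one_mul]

lemma algebraMap_sum_coeff_mul_pow (g : A[X]) :
    algebraMap A S (∑ i ∈ Finset.range (g.natDegree + 1), g.coeff i * f ^ (g.natDegree - i)) =
      algebraMap A S (f ^ g.natDegree) * aeval (invSelf (S := S) f) g := by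
  rw [aeval_eq_sum_range, map_sum, Finset.mul_sum]
  refine Finset.sum_congr rfl fun i hi => ?_
  rw [Algebra.smul_def, mul_left_comm,
    algebraMap_pow_mul_invSelf_pow (Nat.lt_succ_iff.mp (Finset.mem_range.mp hi)), map_mul]

end Localization

namespace EReal

lemma coe_mul_iSup_le {ι : Sort*} {c : ℝ} (hc : 0 < c) {s : ι → EReal} {t : EReal}
    (h : ∀ i, (c : EReal) * s i ≤ t) : (c : EReal) * ⨆ i, s i ≤ t := by
  have hc' : (0 : EReal) < c := by exact_mod_cast hc
  rw [mul_comm, ← le_div_iff_mul_le hc' (coe_ne_top c)]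
  exact iSup_le fun i => (le_div_iff_mul_le hc' (coe_ne_top c)).mpr (mul_comm (s i) c ▸ h i)

end EReal

section fractionSup

variable {A : Type*} [CommRing A] {ν : A → EReal} {f : A} {d : ℝ}

/-- The function `τ` of the statement. -/
def fractionSup (ν : A → EReal) (f : A) (d : ℝ) (z : Localization.Away f) : EReal :=
  ⨆ (q : A × ℕ) (_ : algebraMap A (Localization.Away f) q.1
      = algebraMap A (Localization.Away f) (f ^ q.2) * z),
    (ν q.1 - (((q.2 : ℝ) * d : ℝ) : EReal))

lemma le_fractionSup {z : Localization.Away f} {a : A} {m : ℕ}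
    (h : algebraMap A _ a = algebraMap A _ (f ^ m) * z) :
    ν a - (((m : ℝ) * d : ℝ) : EReal) ≤ fractionSup ν f d z :=
  le_iSup₂_of_le (a, m) h le_rfl

lemma fractionSup_zero (h0 : ν 0 = ⊤) : fractionSup ν f d 0 = ⊤ := by
  have h := le_fractionSup (ν := ν) (d := d)
    (show algebraMap A (Localization.Away f) 0 = algebraMap A _ (f ^ 0) * 0 by simp)
  rwa [h0, EReal.top_sub_coe, top_le_iff] at h

lemma fractionSup_le_locPV (h0 : ν 0 = ⊤) (z : Localization.Away f) :
    fractionSup ν f d z ≤ locPV ν f d z :=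
  iSup₂_le fun q hq => polyPV_monomial h0 q.2 q.1 ▸
    le_iSup₂_of_le (monomial q.2 q.1) (aeval_invSelf_monomial hq) le_rfl

lemma coe_mul_polyPV_le_fractionSup (hν : IsNegativePV ν) (hd : 0 < d) {r : ℝ} (hrd : r ≤ d)
    (hrf : (r : EReal) ≤ ν f) (g : A[X]) :
    (((2 * d - r) / d : ℝ) : EReal) * polyPV ν d g ≤
      fractionSup ν f d (aeval (IsLocalization.Away.invSelf (S := Localization.Away f) f) g) := by
  obtain ⟨hpv, hb, hneg⟩ := hν
  rcases eq_or_ne g 0 with rfl | hg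
  · simp [fractionSup_zero hpv.map_zero]
  set n := g.natDegree
  have hVn := polyPV_le_neg_natDegree_mul (d := d) hneg hg
  obtain ⟨v, hv⟩ : ∃ v : ℝ, (v : EReal) = polyPV ν d g :=
    ⟨_, EReal.coe_toReal (ne_top_of_le_ne_top (EReal.coe_ne_top _) hVn)
      (polyPV_ne_bot hpv.map_zero hb g)⟩
  rw [← hv] at hVn ⊢
  have hvn : v ≤ -(n * d) := EReal.coe_le_coe_iff.mp hVn
  -- `n ≤ -v/d` and `r - d ≤ 0` give `n (r - d) ≥ v (d - r) / d`
  have key : (2 * d - r) / d * v ≤ v + n * r - n * d := by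
    rw [div_mul_eq_mul_div, div_le_iff₀ hd]
    nlinarith [mul_nonneg (by linarith : (0:ℝ) ≤ -v - n * d) (by linarith : (0:ℝ) ≤ d - r)]
  calc (((2 * d - r) / d : ℝ) : EReal) * v
        ≤ ((v + n * r : ℝ) : EReal) - ((n * d : ℝ) : EReal) := by
        rw [← EReal.coe_mul, ← EReal.coe_sub, EReal.coe_le_coe_iff]; exact key
    _ ≤ ν (∑ i ∈ Finset.range (n + 1), g.coeff i * f ^ (n - i)) - ((n * d : ℝ) : EReal) :=
        EReal.sub_le_sub (add_nat_mul_le_sum_coeff_mul_pow hpv hb hrd hrf hv.le n)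
          le_rfl
    _ ≤ _ := le_fractionSup (algebraMap_sum_coeff_mul_pow g)

lemma coe_mul_locPV_le_fractionSup (hν : IsNegativePV ν) (hd : 0 < d) {r : ℝ} (hrd : r ≤ d)
    (hrf : (r : EReal) ≤ ν f) (z : Localization.Away f) :
    (((2 * d - r) / d : ℝ) : EReal) * locPV ν f d z ≤ fractionSup ν f d z := by
  have hQ : 0 < (2 * d - r) / d := div_pos (by linarith) hd
  exact EReal.coe_mul_iSup_le hQ fun g => EReal.coe_mul_iSup_le hQ fun hg =>
    hg ▸ coe_mul_polyPV_le_fractionSup hν hd hrd hrf g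

end fractionSup

theorem statement4_general (A : Type*) [CommRing A]
    (ν : A → EReal) (hν : IsNegativePV ν)
    (f : A) (d : ℝ) (hd : 0 < d) :
    ∃ Q : ℝ, 0 < Q ∧ ∀ z : Localization.Away f,
      (⨆ (q : A × ℕ) (_ : algebraMap A (Localization.Away f) q.1
          = algebraMap A (Localization.Away f) (f ^ q.2) * z),
        (ν q.1 - (((q.2 : ℝ) * d : ℝ) : EReal))) ≤ locPV ν f d z ∧
      (Q : EReal) * locPV ν f d z ≤
      (⨆ (q : A × ℕ) (_ : algebraMap A (Localization.Away f) q.1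
          = algebraMap A (Localization.Away f) (f ^ q.2) * z),
        (ν q.1 - (((q.2 : ℝ) * d : ℝ) : EReal))) := by
  obtain ⟨r, hr0, hrf⟩ : ∃ r : ℝ, r ≤ 0 ∧ (r : EReal) ≤ ν f :=
    ⟨min (ν f).toReal 0, min_le_right _ _,
      (EReal.coe_le_coe_iff.mpr (min_le_left _ _)).trans (EReal.coe_toReal_le (hν.2.1 f))⟩
  have hrd : r ≤ d := by linarith
  exact ⟨(2 * d - r) / d, div_pos (by linarith) hd, fun z =>
    ⟨fractionSup_le_locPV hν.1.map_zero z, coe_mul_locPV_le_fractionSup hν hd hrd hrf z⟩⟩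

/-- For a non-zero divisor `f` and `d > 0`, the function
`τ(z) = sup { ν(a) - m d : z = a/f^m }` satisfies `ν'(z) ≥ τ(z) ≥ Q ν'(z)` for some
constant `Q > 0`, where `ν'` is the induced pseudovaluation on `A_f`. -/
theorem statement4 (A : Type*) [CommRing A]
    (ν : A → EReal) (hν : IsNegativePV ν)
    (f : A) (hf : f ∈ nonZeroDivisors A) (d : ℝ) (hd : 0 < d) :
    ∃ Q : ℝ, 0 < Q ∧ ∀ z : Localization.Away f,
      (⨆ (q : A × ℕ) (_ : algebraMap A (Localization.Away f) q.1
          = algebraMap A (Localization.Away f) (f ^ q.2) * z),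
        (ν q.1 - (((q.2 : ℝ) * d : ℝ) : EReal))) ≤ locPV ν f d z ∧
      (Q : EReal) * locPV ν f d z ≤
      (⨆ (q : A × ℕ) (_ : algebraMap A (Localization.Away f) q.1
          = algebraMap A (Localization.Away f) (f ^ q.2) * z),
        (ν q.1 - (((q.2 : ℝ) * d : ℝ) : EReal))) :=
  statement4_general A ν hν f d hd
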